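/- arXiv:2605.08216 — 3 statements merged into one kernel-verified Lean document; each statement's English description precedes it below -/
import Mathlib

section
/- Let V be a real inner product space, let a ∈ V, let d₁,…,d_k ∈ V, let ξ ∈ ℝ^k with ‖ξ‖ ≤ 1, let u ≥ 0 be a real number, and set D(ξ) = Σᵢ ξᵢ dᵢ, |D|² = Σᵢ ‖dᵢ‖². Then ((1+‖ξ‖²)/2)‖a‖² + ((1−‖ξ‖²)/2)(|D|² + u) + ‖D(ξ)‖² + 2⟨a, D(ξ)⟩ ≥ ((1−‖ξ‖²)/2)·u. In particular the left-hand side is nonnegative. -/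
open RealInnerProductSpace Finset

/-- Weak energy condition for the Higgs sector: for a causal vector `X = n + ξ`
with `‖ξ‖ ≤ 1` and nonnegative potential `u`,
`T^{Higgs}(X,X) = ((1+‖ξ‖²)/2)‖a‖² + ((1−‖ξ‖²)/2)(|D|² + u) + ‖D(ξ)‖² + 2⟨a, D(ξ)⟩`
is bounded below by `((1−‖ξ‖²)/2) u`. -/
theorem higgs_wec {V : Type*} [NormedAddCommGroup V] [InnerProductSpace ℝ V]
    {k : ℕ} (a : V) (d : Fin k → V) (ξ : Fin k → ℝ)
    (hξ : ∑ i, (ξ i) ^ 2 ≤ 1) (u : ℝ) (hu : 0 ≤ u) :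
    ((1 + ∑ i, (ξ i) ^ 2) / 2) * ‖a‖ ^ 2
      + ((1 - ∑ i, (ξ i) ^ 2) / 2) * ((∑ i, ‖d i‖ ^ 2) + u)
      + ‖∑ i, ξ i • d i‖ ^ 2 + 2 * ⟪a, ∑ i, ξ i • d i⟫
    ≥ ((1 - ∑ i, (ξ i) ^ 2) / 2) * u := by
  set D := ∑ i, ξ i • d i with hD
  set s := ∑ i, (ξ i) ^ 2 with hs
  have hs0 : 0 ≤ s := Finset.sum_nonneg fun i _ => sq_nonneg _
  have hT0 : 0 ≤ ∑ i, ‖d i‖ ^ 2 := Finset.sum_nonneg fun i _ => sq_nonneg _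
  have hCS : ‖D‖ ^ 2 ≤ s * ∑ i, ‖d i‖ ^ 2 := by
    calc ‖D‖ ^ 2 ≤ (∑ i, |ξ i| * ‖d i‖) ^ 2 := by
          apply pow_le_pow_left₀ (norm_nonneg _)
          calc ‖D‖ ≤ ∑ i, ‖ξ i • d i‖ := norm_sum_le _ _
            _ = ∑ i, |ξ i| * ‖d i‖ := by simp [norm_smul]
      _ ≤ (∑ i, |ξ i| ^ 2) * ∑ i, ‖d i‖ ^ 2 := Finset.sum_mul_sq_le_sq_mul_sq _ _ _
      _ = s * ∑ i, ‖d i‖ ^ 2 := by simp [sq_abs, hs]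
  have hinner : -(‖a‖ * ‖D‖) ≤ ⟪a, D⟫ :=
    neg_le_of_abs_le (abs_real_inner_le_norm a D)
  rcases eq_or_lt_of_le hs0 with h0 | hpos
  · have hy : ‖D‖ ^ 2 ≤ 0 := by nlinarith
    have hy0 : ‖D‖ = 0 := by nlinarith [sq_nonneg ‖D‖, norm_nonneg D]
    rw [← h0]
    nlinarith [sq_nonneg ‖a‖]
  · have key : (0:ℝ) ≤ s * (‖a‖ - ‖D‖) ^ 2 + (s * ‖a‖ - ‖D‖) ^ 2
        + (1 - s) * (s * (∑ i, ‖d i‖ ^ 2) - ‖D‖ ^ 2)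
        + 4 * s * (⟪a, D⟫ + ‖a‖ * ‖D‖) := by
      have h1 : 0 ≤ s * (‖a‖ - ‖D‖) ^ 2 := mul_nonneg hs0 (sq_nonneg _)
      have h2 : 0 ≤ (1 - s) * (s * (∑ i, ‖d i‖ ^ 2) - ‖D‖ ^ 2) :=
        mul_nonneg (by linarith) (by linarith)
      have h3 : 0 ≤ 4 * s * (⟪a, D⟫ + ‖a‖ * ‖D‖) :=
        mul_nonneg (by linarith) (by linarith)
      nlinarith [sq_nonneg (s * ‖a‖ - ‖D‖)]
    nlinarith [key, hpos]
end

section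
/- Let V be a real inner product space, let E ∈ V^k (vectors E₁,…,E_k) and B an antisymmetric array B_{ij} ∈ V for 1 ≤ i,j ≤ k (B_{ij} = −B_{ji}). Define |E|² = Σᵢ ‖Eᵢ‖², |B|² = (1/2) Σ_{i,j} ‖B_{ij}‖², and Zᵢ = Σ_j ⟨E_j, B_{ij}⟩. Then −(1/4)(|E|² + |B|²)² + Σᵢ Zᵢ² ≤ −(1/4)(|E|² − |B|²)² ≤ 0. -/
open RealInnerProductSpace Finset

lemma ym_poynting_sq_le {V : Type*} [NormedAddCommGroup V] [InnerProductSpace ℝ V]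
    {k : ℕ} (E : Fin k → V) (B : Fin k → Fin k → V)
    (hB : ∀ i j, B i j = -B j i) :
    ∑ i, (∑ j, ⟪E j, B i j⟫) ^ 2
      ≤ (∑ i, ‖E i‖ ^ 2) * ((1/2) * ∑ i, ∑ j, ‖B i j‖ ^ 2) := by
  set Z : Fin k → ℝ := fun i => ∑ j, ⟪E j, B i j⟫ with hZ
  set a : ℝ := ∑ i, ‖E i‖ ^ 2 with ha
  set b2 : ℝ := ∑ i, ∑ j, ‖B i j‖ ^ 2 with hb2
  set S : ℝ := ∑ i, (Z i) ^ 2 with hS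
  have hS0 : 0 ≤ S := Finset.sum_nonneg fun i _ => sq_nonneg _
  have ha0 : 0 ≤ a := Finset.sum_nonneg fun i _ => sq_nonneg _
  have hb20 : 0 ≤ b2 :=
    Finset.sum_nonneg fun i _ => Finset.sum_nonneg fun j _ => sq_nonneg _
  -- step 1 : S = ∑ i, ∑ j, Z i * ⟪E j, B i j⟫
  have step1 : S = ∑ i, ∑ j, Z i * ⟪E j, B i j⟫ := by
    rw [hS]
    refine Finset.sum_congr rfl fun i _ => ?_
    rw [sq, ← Finset.mul_sum]
  -- antisymmetry: swapped sum is the negative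
  have swap : ∑ i, ∑ j, Z j * ⟪E i, B i j⟫ = - ∑ i, ∑ j, Z i * ⟪E j, B i j⟫ := by
    rw [Finset.sum_comm]
    rw [← Finset.sum_neg_distrib]
    refine Finset.sum_congr rfl fun j _ => ?_
    rw [← Finset.sum_neg_distrib]
    refine Finset.sum_congr rfl fun i _ => ?_
    rw [hB i j, inner_neg_right]; ring
  -- step 2 : 2 S = ∑∑ ⟪Z i • E j - Z j • E i, B i j⟫
  have step2 : 2 * S = ∑ i, ∑ j, ⟪Z i • E j - Z j • E i, B i j⟫ := by
    have : ∀ i j : Fin k, ⟪Z i • E j - Z j • E i, B i j⟫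
        = Z i * ⟪E j, B i j⟫ - Z j * ⟪E i, B i j⟫ := by
      intro i j
      rw [inner_sub_left, real_inner_smul_left, real_inner_smul_left]
    simp only [this, Finset.sum_sub_distrib]
    rw [swap, ← step1]
    ring
  -- pointwise Cauchy-Schwarz
  have step3 : 2 * S ≤ ∑ i, ∑ j, ‖Z i • E j - Z j • E i‖ * ‖B i j‖ := by
    rw [step2]
    refine Finset.sum_le_sum fun i _ => Finset.sum_le_sum fun j _ => ?_
    exact real_inner_le_norm _ _
  -- Cauchy-Schwarz for sums over pairs
  have CS : (∑ i, ∑ j, ‖Z i • E j - Z j • E i‖ * ‖B i j‖) ^ 2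
      ≤ (∑ i, ∑ j, ‖Z i • E j - Z j • E i‖ ^ 2) * (∑ i, ∑ j, ‖B i j‖ ^ 2) := by
    have := Finset.sum_mul_sq_le_sq_mul_sq (Finset.univ : Finset (Fin k × Fin k))
      (fun p => ‖Z p.1 • E p.2 - Z p.2 • E p.1‖) (fun p => ‖B p.1 p.2‖)
    simpa only [Fintype.sum_prod_type] using this
  -- bound ∑∑ ‖W‖²
  have Wbound : ∑ i, ∑ j, ‖Z i • E j - Z j • E i‖ ^ 2 ≤ 2 * S * a := by
    have expand : ∀ i j : Fin k, ‖Z i • E j - Z j • E i‖ ^ 2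
        = Z i ^ 2 * ‖E j‖ ^ 2 + Z j ^ 2 * ‖E i‖ ^ 2 - 2 * (Z i * Z j * ⟪E j, E i⟫) := by
      intro i j
      simp only [norm_sub_sq_real, real_inner_smul_left, real_inner_smul_right, norm_smul,
        mul_pow, Real.norm_eq_abs, sq_abs]
      ring
    have cross : ∑ i, ∑ j, Z i * Z j * ⟪E j, E i⟫ = ‖∑ i, Z i • E i‖ ^ 2 := by
      rw [← real_inner_self_eq_norm_sq, sum_inner]
      refine Finset.sum_congr rfl fun j _ => ?_
      rw [real_inner_smul_left, inner_sum, Finset.mul_sum]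
      refine Finset.sum_congr rfl fun i _ => ?_
      rw [real_inner_smul_right, real_inner_comm]
      ring
    have sumc : ∑ i, ∑ j, 2 * (Z i * Z j * ⟪E j, E i⟫) = 2 * ‖∑ i, Z i • E i‖ ^ 2 := by
      rw [← cross, Finset.mul_sum]
      exact Finset.sum_congr rfl fun i _ => (Finset.mul_sum _ _ _).symm
    have sum1 : ∑ i, ∑ j, Z i ^ 2 * ‖E j‖ ^ 2 = S * a := by
      rw [hS, ha, ← Finset.sum_mul_sum]
    have sum2 : ∑ i, ∑ j, Z j ^ 2 * ‖E i‖ ^ 2 = S * a := by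
      rw [Finset.sum_comm, hS, ha]
      rw [← Finset.sum_mul_sum]
    calc ∑ i, ∑ j, ‖Z i • E j - Z j • E i‖ ^ 2
        = ∑ i, ∑ j, (Z i ^ 2 * ‖E j‖ ^ 2 + Z j ^ 2 * ‖E i‖ ^ 2
            - 2 * (Z i * Z j * ⟪E j, E i⟫)) := by
          exact Finset.sum_congr rfl fun i _ => Finset.sum_congr rfl fun j _ => expand i j
      _ = S * a + S * a - 2 * ‖∑ i, Z i • E i‖ ^ 2 := by
          simp only [Finset.sum_add_distrib, Finset.sum_sub_distrib]
          rw [sum1, sum2, ← sumc]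
      _ ≤ 2 * S * a := by nlinarith [sq_nonneg ‖∑ i, Z i • E i‖]
  -- combine
  have sq_ineq : (2 * S) ^ 2 ≤ 2 * S * a * b2 := by
    have h1 : (2 * S) ^ 2 ≤ (∑ i, ∑ j, ‖Z i • E j - Z j • E i‖ * ‖B i j‖) ^ 2 := by
      apply pow_le_pow_left₀ (by linarith) step3 2
    calc (2 * S) ^ 2 ≤ (∑ i, ∑ j, ‖Z i • E j - Z j • E i‖ * ‖B i j‖) ^ 2 := h1
      _ ≤ (∑ i, ∑ j, ‖Z i • E j - Z j • E i‖ ^ 2) * (∑ i, ∑ j, ‖B i j‖ ^ 2) := CS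
      _ ≤ 2 * S * a * b2 := by
          apply mul_le_mul_of_nonneg_right Wbound hb20
  -- conclude S ≤ a * (b2/2)
  clear_value Z a b2 S
  rcases eq_or_lt_of_le hS0 with h | h
  · rw [← h]
    have : (0:ℝ) ≤ 1/2 * b2 := by linarith
    nlinarith [mul_nonneg ha0 this]
  · nlinarith

/-- Yang-Mills dominant energy condition in the normal direction: with
`Zᵢ = Σⱼ ⟨Eⱼ, Bᵢⱼ⟩` and `B` antisymmetric,
`−(1/4)(|E|²+|B|²)² + Σᵢ Zᵢ² ≤ −(1/4)(|E|²−|B|²)² ≤ 0`. -/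
theorem ym_dec_normal {V : Type*} [NormedAddCommGroup V] [InnerProductSpace ℝ V]
    {k : ℕ} (E : Fin k → V) (B : Fin k → Fin k → V)
    (hB : ∀ i j, B i j = -B j i) :
    -(1/4) * ((∑ i, ‖E i‖ ^ 2) + (1/2) * ∑ i, ∑ j, ‖B i j‖ ^ 2) ^ 2
        + ∑ i, (∑ j, ⟪E j, B i j⟫) ^ 2
      ≤ -(1/4) * ((∑ i, ‖E i‖ ^ 2) - (1/2) * ∑ i, ∑ j, ‖B i j‖ ^ 2) ^ 2 ∧
    -(1/4) * ((∑ i, ‖E i‖ ^ 2) - (1/2) * ∑ i, ∑ j, ‖B i j‖ ^ 2) ^ 2 ≤ 0 := by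
  have key := ym_poynting_sq_le E B hB
  constructor
  · nlinarith [key]
  · nlinarith [sq_nonneg ((∑ i, ‖E i‖ ^ 2) - (1/2) * ∑ i, ∑ j, ‖B i j‖ ^ 2)]
end

section
/- For a real inner product space V, vectors E₁,…,E_k ∈ V, an antisymmetric V-valued array B_{ij}, and ξ ∈ ℝ^k with ‖ξ‖ ≤ 1, define E(ξ) = Σᵢ ξᵢ Eᵢ, (ξ⌟B)_j = Σᵢ ξᵢ B_{ij}, |E|² = Σᵢ‖Eᵢ‖², |B|² = (1/2)Σ‖B_{ij}‖². Then the quantity Q := ‖E(ξ)‖²(1−‖ξ‖²)/‖ξ‖² + ((1+‖ξ‖²)/2)|E|² + 2Σ_j⟨E_j, (ξ⌟B)_j⟩ + ‖E(ξ)‖²/‖ξ‖² + Σ_j‖(ξ⌟B)_j‖² + ((1−‖ξ‖²)/2)|B|² is nonnegative (for ξ ≠ 0; for ξ = 0 the statement is (1/2)(|E|²+|B|²) ≥ 0). -/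
open RealInnerProductSpace Finset

section YMAux
variable {V : Type*} [NormedAddCommGroup V] [InnerProductSpace ℝ V] {k : ℕ}

private lemma real_aux (A W T c s : ℝ) (hA : 0 ≤ A) (hW : 0 ≤ W) (hT : 0 ≤ T)
    (hs : 0 < s) (hs1 : s ≤ 1) (hc : c^2 ≤ A * W) (hWT : 2*(s*W) ≤ s^2*T) :
    0 ≤ ((1+s)/2)*A + 2*c + W + ((1-s)/2)*((1/2)*T) := by
  have h2W : 2*W ≤ s*T := by
    have h := (mul_le_mul_iff_right₀ hs).mp (show s*(2*W) ≤ s*(s*T) by nlinarith)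
    exact h
  have hD0 : 0 ≤ s*(1+s)*A + (1+s)*W := by positivity
  have hc16 : 16*s^2*c^2 ≤ 16*s^2*(A*W) := by nlinarith [hc, sq_nonneg s]
  have h16 : 16*s^2*(A*W) ≤ (s*(1+s)*A + (1+s)*W)^2 := by
    nlinarith [sq_nonneg (s*(1+s)*A - (1+s)*W),
      mul_nonneg (mul_nonneg (mul_nonneg hs.le hA) hW) (sq_nonneg (1-s))]
  have hD : 0 ≤ s*(1+s)*A + (1+s)*W + 4*s*c := by
    nlinarith [hD0, hc16, h16]
  have hTgt : 0 ≤ 2*s*(((1+s)/2)*A + 2*c + W + ((1-s)/2)*((1/2)*T)) := by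
    nlinarith [hD, mul_nonneg (by linarith : (0:ℝ) ≤ 1-s) (by linarith : (0:ℝ) ≤ s*T - 2*W)]
  have h2s : (0:ℝ) < 2*s := by linarith
  nlinarith [hTgt, h2s, mul_pos h2s h2s]

private lemma key_B (B : Fin k → Fin k → V) (hB : ∀ i j, B i j = -B j i) (ξ : Fin k → ℝ) :
    2 * ((∑ i, (ξ i)^2) * ∑ j, ‖∑ i, ξ i • B i j‖^2) ≤
      (∑ i, (ξ i)^2)^2 * ∑ i, ∑ j, ‖B i j‖^2 := by
  set s := ∑ i, (ξ i)^2 with hs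
  set v : Fin k → V := fun j => ∑ i, ξ i • B i j with hv
  have hvneg : ∀ i, ∑ j, ξ j • B i j = -v i := by
    intro i
    simp only [hv]
    rw [← Finset.sum_neg_distrib]
    exact Finset.sum_congr rfl fun j _ => by rw [hB i j]; simp
  have hu : ∑ j, ξ j • v j = (0 : V) := by
    have h1 : ∑ j, ξ j • v j = ∑ j, ∑ i, (ξ j * ξ i) • B i j := by
      simp [hv, Finset.smul_sum, smul_smul]
    have h2 : ∑ j, ∑ i, (ξ j * ξ i) • B i j = -∑ j, ∑ i, (ξ j * ξ i) • B i j := by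
      nth_rewrite 1 [Finset.sum_comm]
      rw [← Finset.sum_neg_distrib]
      refine Finset.sum_congr rfl fun j _ => ?_
      rw [← Finset.sum_neg_distrib]
      refine Finset.sum_congr rfl fun i _ => ?_
      rw [hB j i, mul_comm]
      simp
    have h3 : (2:ℝ) • (∑ j, ∑ i, (ξ j * ξ i) • B i j) = 0 := by
      rw [two_smul]; nth_rewrite 2 [h2]; simp
    rw [h1]
    exact (smul_eq_zero.mp h3).resolve_left (by norm_num)
  -- expansion of each square
  have expand : ∀ i j, ‖ξ i • v j - ξ j • v i - s • B i j‖^2 =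
      (ξ i)^2 * ‖v j‖^2 + (ξ j)^2 * ‖v i‖^2 + s^2 * ‖B i j‖^2
      - 2 * (ξ i * ξ j) * ⟪v j, v i⟫
      - 2 * (s * ξ i) * ⟪v j, B i j⟫
      + 2 * (s * ξ j) * ⟪v i, B i j⟫ := by
    intro i j
    rw [← real_inner_self_eq_norm_sq]
    simp only [inner_sub_left, inner_sub_right, real_inner_smul_left, real_inner_smul_right,
      real_inner_self_eq_norm_sq]
    rw [real_inner_comm (v i) (v j), real_inner_comm (B i j) (v j), real_inner_comm (B i j) (v i)]
    simp only [norm_smul, mul_pow, sq_abs, Real.norm_eq_abs]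
    ring
  have h0 : (0:ℝ) ≤ ∑ i, ∑ j, ‖ξ i • v j - ξ j • v i - s • B i j‖^2 := by positivity
  have hsum : ∑ i, ∑ j, ‖ξ i • v j - ξ j • v i - s • B i j‖^2
      = s^2 * (∑ i, ∑ j, ‖B i j‖^2) - 2 * (s * ∑ j, ‖v j‖^2) := by
    have A1 : ∑ i, ∑ j, (ξ i)^2 * ‖v j‖^2 = s * ∑ j, ‖v j‖^2 := by
      simp_rw [← Finset.mul_sum, ← Finset.sum_mul]
      rfl
    have A2 : ∑ i, ∑ j, (ξ j)^2 * ‖v i‖^2 = s * ∑ j, ‖v j‖^2 := by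
      rw [Finset.sum_comm]; exact A1
    have A3 : ∑ i, ∑ j, s^2 * ‖B i j‖^2 = s^2 * ∑ i, ∑ j, ‖B i j‖^2 := by
      simp [Finset.mul_sum]
    have A4 : ∑ i, ∑ j, 2 * (ξ i * ξ j) * ⟪v j, v i⟫ = 0 := by
      refine Finset.sum_eq_zero fun i _ => ?_
      have h : ∑ j, 2 * (ξ i * ξ j) * ⟪v j, v i⟫ = 2 * ξ i * ⟪∑ j, ξ j • v j, v i⟫ := by
        rw [sum_inner, Finset.mul_sum]
        exact Finset.sum_congr rfl fun j _ => by rw [real_inner_smul_left]; ring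
      rw [h, hu]
      simp
    have A5 : ∑ i, ∑ j, 2 * (s * ξ i) * ⟪v j, B i j⟫ = 2 * (s * ∑ j, ‖v j‖^2) := by
      rw [Finset.sum_comm]
      have h : ∀ j, ∑ i, 2 * (s * ξ i) * ⟪v j, B i j⟫ = 2 * (s * ‖v j‖^2) := by
        intro j
        have h2 : ∑ i, 2 * (s * ξ i) * ⟪v j, B i j⟫ = 2 * s * ⟪v j, ∑ i, ξ i • B i j⟫ := by
          rw [inner_sum, Finset.mul_sum]
          exact Finset.sum_congr rfl fun i _ => by rw [real_inner_smul_right]; ring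
        rw [h2]
        have hvj : (∑ i, ξ i • B i j) = v j := rfl
        rw [hvj, real_inner_self_eq_norm_sq]; ring
      rw [Finset.sum_congr rfl fun j _ => h j]
      simp [Finset.mul_sum]
    have A6 : ∑ i, ∑ j, 2 * (s * ξ j) * ⟪v i, B i j⟫ = -(2 * (s * ∑ j, ‖v j‖^2)) := by
      have h : ∀ i, ∑ j, 2 * (s * ξ j) * ⟪v i, B i j⟫ = -(2 * (s * ‖v i‖^2)) := by
        intro i
        have h2 : ∑ j, 2 * (s * ξ j) * ⟪v i, B i j⟫ = 2 * s * ⟪v i, ∑ j, ξ j • B i j⟫ := by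
          rw [inner_sum, Finset.mul_sum]
          exact Finset.sum_congr rfl fun j _ => by rw [real_inner_smul_right]; ring
        rw [h2, hvneg i, inner_neg_right, real_inner_self_eq_norm_sq]; ring
      rw [Finset.sum_congr rfl fun i _ => h i]
      simp [Finset.mul_sum]
    calc ∑ i, ∑ j, ‖ξ i • v j - ξ j • v i - s • B i j‖^2
        = ∑ i, ∑ j, ((ξ i)^2 * ‖v j‖^2 + (ξ j)^2 * ‖v i‖^2 + s^2 * ‖B i j‖^2
            - 2 * (ξ i * ξ j) * ⟪v j, v i⟫ - 2 * (s * ξ i) * ⟪v j, B i j⟫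
            + 2 * (s * ξ j) * ⟪v i, B i j⟫) := by
          exact Finset.sum_congr rfl fun i _ => Finset.sum_congr rfl fun j _ => expand i j
      _ = s^2 * (∑ i, ∑ j, ‖B i j‖^2) - 2 * (s * ∑ j, ‖v j‖^2) := by
          simp only [Finset.sum_add_distrib, Finset.sum_sub_distrib]
          rw [A1, A2, A3, A4, A5, A6]
          ring
  have hfin : 2 * (s * ∑ j, ‖v j‖^2) ≤ s^2 * ∑ i, ∑ j, ‖B i j‖^2 := by
    rw [hsum] at h0; linarith
  exact hfin

end YMAux

/-- Weak/null energy condition for the Yang-Mills sector: `T^{YM}(X,X) ≥ 0` for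
causal `X = n + ξ`, `‖ξ‖ ≤ 1`, in the electric-magnetic decomposition.
For `ξ ≠ 0` the quantity `Q` below is nonnegative; for `ξ = 0` the statement is
`(1/2)(|E|² + |B|²) ≥ 0`. -/
theorem ym_wec {V : Type*} [NormedAddCommGroup V] [InnerProductSpace ℝ V]
    {k : ℕ} (E : Fin k → V) (B : Fin k → Fin k → V)
    (hB : ∀ i j, B i j = -B j i) (ξ : Fin k → ℝ)
    (hξ : ∑ i, (ξ i) ^ 2 ≤ 1) :
    ((∑ i, (ξ i) ^ 2) ≠ 0 →
      0 ≤ ‖∑ i, ξ i • E i‖ ^ 2 * (1 - ∑ i, (ξ i) ^ 2) / (∑ i, (ξ i) ^ 2)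
        + ((1 + ∑ i, (ξ i) ^ 2) / 2) * (∑ i, ‖E i‖ ^ 2)
        + 2 * ∑ j, ⟪E j, ∑ i, ξ i • B i j⟫
        + ‖∑ i, ξ i • E i‖ ^ 2 / (∑ i, (ξ i) ^ 2)
        + (∑ j, ‖∑ i, ξ i • B i j‖ ^ 2)
        + ((1 - ∑ i, (ξ i) ^ 2) / 2) * ((1/2) * ∑ i, ∑ j, ‖B i j‖ ^ 2)) ∧
    (ξ = 0 →
      0 ≤ (1/2) * ((∑ i, ‖E i‖ ^ 2) + (1/2) * ∑ i, ∑ j, ‖B i j‖ ^ 2)) := by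
  constructor
  · intro hsne
    have hs0 : (0:ℝ) ≤ ∑ i, (ξ i)^2 := Finset.sum_nonneg fun i _ => sq_nonneg _
    have hspos : (0:ℝ) < ∑ i, (ξ i)^2 := lt_of_le_of_ne hs0 (Ne.symm hsne)
    have hA : (0:ℝ) ≤ ∑ i, ‖E i‖^2 := Finset.sum_nonneg fun i _ => sq_nonneg _
    have hW : (0:ℝ) ≤ ∑ j, ‖∑ i, ξ i • B i j‖^2 := Finset.sum_nonneg fun j _ => sq_nonneg _
    have hT : (0:ℝ) ≤ ∑ i, ∑ j, ‖B i j‖^2 :=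
      Finset.sum_nonneg fun i _ => Finset.sum_nonneg fun j _ => sq_nonneg _
    have hkey := key_B B hB ξ
    have hWT : 2*((∑ i, (ξ i)^2) * ∑ j, ‖∑ i, ξ i • B i j‖^2)
        ≤ (∑ i, (ξ i)^2)^2 * ∑ i, ∑ j, ‖B i j‖^2 := hkey
    -- Cauchy-Schwarz for the cross term
    have hCS : (∑ j, ⟪E j, ∑ i, ξ i • B i j⟫)^2
        ≤ (∑ i, ‖E i‖^2) * (∑ j, ‖∑ i, ξ i • B i j‖^2) := by
      have h1 : |∑ j, ⟪E j, ∑ i, ξ i • B i j⟫| ≤ ∑ j, ‖E j‖ * ‖∑ i, ξ i • B i j‖ := by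
        refine (Finset.abs_sum_le_sum_abs _ _).trans ?_
        exact Finset.sum_le_sum fun j _ => abs_real_inner_le_norm _ _
      have h2 : (∑ j, ‖E j‖ * ‖∑ i, ξ i • B i j‖)^2
          ≤ (∑ i, ‖E i‖^2) * (∑ j, ‖∑ i, ξ i • B i j‖^2) :=
        Finset.sum_mul_sq_le_sq_mul_sq Finset.univ _ _
      calc (∑ j, ⟪E j, ∑ i, ξ i • B i j⟫)^2
          = |∑ j, ⟪E j, ∑ i, ξ i • B i j⟫|^2 := (sq_abs _).symm
        _ ≤ (∑ j, ‖E j‖ * ‖∑ i, ξ i • B i j‖)^2 := by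
            apply pow_le_pow_left₀ (abs_nonneg _) h1
        _ ≤ _ := h2
    have hmain := real_aux (∑ i, ‖E i‖^2) (∑ j, ‖∑ i, ξ i • B i j‖^2)
      (∑ i, ∑ j, ‖B i j‖^2) (∑ j, ⟪E j, ∑ i, ξ i • B i j⟫) (∑ i, (ξ i)^2)
      hA hW hT hspos hξ hCS (by nlinarith [hWT])
    have hP1 : 0 ≤ ‖∑ i, ξ i • E i‖^2 * (1 - ∑ i, (ξ i)^2) / (∑ i, (ξ i)^2) := by
      apply div_nonneg _ hs0
      exact mul_nonneg (sq_nonneg _) (by linarith)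
    have hP2 : 0 ≤ ‖∑ i, ξ i • E i‖^2 / (∑ i, (ξ i)^2) := div_nonneg (sq_nonneg _) hs0
    linarith [hmain, hP1, hP2]
  · intro _
    have hA : (0:ℝ) ≤ ∑ i, ‖E i‖^2 := Finset.sum_nonneg fun i _ => sq_nonneg _
    have hT : (0:ℝ) ≤ ∑ i, ∑ j, ‖B i j‖^2 :=
      Finset.sum_nonneg fun i _ => Finset.sum_nonneg fun j _ => sq_nonneg _
    linarith
end
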